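/- arXiv:2412.09904 — 2 statements merged into one kernel-verified Lean document; each statement's English description precedes it below -/
import Mathlib

section
/- Let n = 4t with t ≥ 1. The minimum eigenvalue of the Hadamard graph H_n (Cayley graph on F_2^n with connection set the weight-n/2 vectors) equals -C(n, n/2)/(n-1). Equivalently, for all a ∈ F_2^n, Σ_{x: wt(x)=n/2} (-1)^{x·a} ≥ -C(n,n/2)/(n-1), with equality attained for some a. -/
/-- Hamming weight of a binary vector. -/
def hw {n : ℕ} (x : Fin n → ZMod 2) : ℕ :=
  (Finset.univ.filter (fun i => x i ≠ 0)).card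

/-!
The sum of `(-1)^(x·a)` over the vectors `x` of weight `s` is the coefficient of `X^s` in
`∏ᵢ (1 + (-1)^(aᵢ) X) = (1 - X)^w (1 + X)^(n-w)`, where `w = wt a`. For `s = n/2` it
vanishes when `w` is odd, because complementing `x` flips the sign. For `w = 2j` and `n = 2(j+u)` it equals
`(-1)^j C(2j,j) C(2u,u) / C(j+u,j)`, by induction on `j` from `(1 - X)^2 = (1 + X)^2 - 4X`.
This ratio is symmetric in `j, u` and decreases as `j` moves towards the middle, so over odd `j`
(then `u` is odd too, as `j + u = n/2` is even) it is largest at `j = 1`, where it is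
`C(n,n/2)/(n-1)`.
-/

open Finset Polynomial Nat

-- The Krawtchouk polynomial `K_s` of length `k + l`, evaluated at `k`.
noncomputable def krawtchouk (k l s : ℕ) : ℤ := ((1 - X) ^ k * (1 + X) ^ l : ℤ[X]).coeff s

lemma krawtchouk_add_two_left (k l s : ℕ) :
    krawtchouk (k + 2) l (s + 1) = krawtchouk k (l + 2) (s + 1) - 4 * krawtchouk k l s := by
  have h : ((1 - X) ^ (k + 2) * (1 + X) ^ l : ℤ[X])
      = (1 - X) ^ k * (1 + X) ^ (l + 2) - 4 * (X * ((1 - X) ^ k * (1 + X) ^ l)) := by ring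
  rw [krawtchouk, h, coeff_sub, coeff_ofNat_mul, coeff_X_mul, krawtchouk, krawtchouk]

noncomputable def centralRatio (j u : ℕ) : ℚ :=
  centralBinom j * centralBinom u / (j + u).choose j

lemma centralRatio_pos (j u : ℕ) : 0 < centralRatio j u := by
  have := centralBinom_pos j
  have := centralBinom_pos u
  have := choose_pos (le_add_right j u)
  unfold centralRatio
  positivity

lemma centralRatio_comm (j u : ℕ) : centralRatio j u = centralRatio u j := by
  rw [centralRatio, centralRatio, choose_symm_add, add_comm u, mul_comm]

lemma centralRatio_succ_left (j u : ℕ) :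
    centralRatio (j + 1) u = centralRatio j u * (2 * (2 * j + 1) / (j + u + 1)) := by
  have hj : ((j : ℚ) + 1) ≠ 0 := by positivity
  have hc : (centralBinom (j + 1) : ℚ) = 2 * (2 * j + 1) * centralBinom j / (j + 1) := by
    rw [eq_div_iff hj, mul_comm]; exact_mod_cast succ_mul_centralBinom_succ j
  have hb : ((j + u + 1).choose (j + 1) : ℚ) = (j + u + 1) * (j + u).choose j / (j + 1) := by
    rw [eq_div_iff hj]; exact_mod_cast (add_one_mul_choose_eq (j + u) j).symm
  have := choose_pos (le_add_right j u)
  rw [centralRatio, centralRatio, show j + 1 + u = j + u + 1 by ring, hc, hb]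
  field_simp

lemma centralRatio_succ_left_add_succ_right (j u : ℕ) :
    centralRatio (j + 1) u + centralRatio j (u + 1) = 4 * centralRatio j u := by
  rw [centralRatio_comm j (u + 1), centralRatio_succ_left, centralRatio_succ_left,
    centralRatio_comm u j]
  field_simp
  ring

lemma centralRatio_succ_left_le (j u : ℕ) (h : j ≤ u) :
    centralRatio (j + 1) u ≤ centralRatio j (u + 1) := by
  rw [centralRatio_comm j (u + 1), centralRatio_succ_left, centralRatio_succ_left,
    centralRatio_comm u j, add_comm (u : ℚ)]
  gcongr
  exact (centralRatio_pos j u).le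

lemma centralRatio_le_centralRatio_one (j u : ℕ) :
    centralRatio (j + 1) (u + 1) ≤ centralRatio 1 (j + u + 1) := by
  wlog h : j ≤ u generalizing j u
  · rw [centralRatio_comm, add_comm j u]
    exact this u j (by omega)
  induction j generalizing u with
  | zero => rw [zero_add, zero_add]
  | succ j ih =>
    calc centralRatio (j + 2) (u + 1) ≤ centralRatio (j + 1) (u + 2) :=
          centralRatio_succ_left_le _ _ (by omega)
      _ ≤ centralRatio 1 (j + (u + 1) + 1) := ih (u + 1) (by omega)
      _ = centralRatio 1 (j + 1 + u + 1) := by ring_nf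

lemma centralRatio_one (u : ℕ) : centralRatio 1 u = centralBinom (u + 1) / (2 * u + 1) := by
  have hc : ((u + 1 : ℕ) : ℚ) * centralBinom (u + 1) = 2 * (2 * u + 1) * centralBinom u := by
    exact_mod_cast succ_mul_centralBinom_succ u
  rw [centralRatio, add_comm, choose_one_right]
  push_cast at hc ⊢
  field_simp
  rw [show centralBinom 1 = 2 from rfl, hc]
  ring

lemma krawtchouk_even (j u : ℕ) :
    (krawtchouk (2 * j) (2 * u) (j + u) : ℚ) = (-1) ^ j * centralRatio j u := by
  induction j generalizing u with
  | zero =>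
    rw [krawtchouk, mul_zero, pow_zero, one_mul, coeff_one_add_X_pow, centralRatio,
      zero_add, choose_zero_right, centralBinom_zero, ← centralBinom_eq_two_mul_choose]
    simp
  | succ j ih =>
    have ih' := ih (u + 1)
    rw [← add_assoc] at ih'
    rw [show 2 * (j + 1) = 2 * j + 2 by ring, show j + 1 + u = j + u + 1 by ring,
      krawtchouk_add_two_left, show 2 * u + 2 = 2 * (u + 1) by ring, Int.cast_sub,
      Int.cast_mul, ih', ih]
    push_cast
    linear_combination (-1) ^ j * centralRatio_succ_left_add_succ_right j u

lemma neg_centralRatio_one_le {j u m : ℕ} (h : j + u = m + 1) (hm : Odd m) :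
    -centralRatio 1 m ≤ (-1) ^ j * centralRatio j u := by
  rcases Nat.even_or_odd j with hj | hj
  · rw [hj.neg_one_pow, one_mul]
    linarith [centralRatio_pos 1 m, centralRatio_pos j u]
  · obtain ⟨j, rfl⟩ : ∃ j', j = j' + 1 := ⟨j - 1, by have := hj.pos; omega⟩
    obtain ⟨u, rfl⟩ : ∃ u', u = u' + 1 := ⟨u - 1, by grind⟩
    rw [hj.neg_one_pow, neg_one_mul, neg_le_neg_iff, show m = j + u + 1 by omega]
    exact centralRatio_le_centralRatio_one j u

lemma neg_one_pow_val_sum {ι : Type*} (s : Finset ι) (f : ι → ZMod 2) :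
    (-1 : ℤ) ^ (∑ i ∈ s, f i).val = ∏ i ∈ s, (-1 : ℤ) ^ (f i).val := by
  rw [prod_pow_eq_pow_sum, neg_one_pow_eq_pow_mod_two (R := ℤ) (n := ∑ i ∈ s, (f i).val),
    ← ZMod.val_natCast, Nat.cast_sum]
  simp only [ZMod.natCast_val, ZMod.cast_id', id]

section CharacterSum

variable {n : ℕ}

lemma hw_eq_sum_val (x : Fin n → ZMod 2) : hw x = ∑ i, (x i).val := by
  rw [hw, card_filter]
  have h : ∀ b : ZMod 2, (if b ≠ 0 then 1 else 0) = b.val := by decide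
  exact sum_congr rfl fun i _ => h (x i)

lemma sum_sign_mul_X_pow_val (c : ZMod 2) :
    ∑ b : ZMod 2, C ((-1 : ℤ) ^ (b * c).val) * X ^ b.val
      = if c ≠ 0 then 1 - X else 1 + X := by
  rw [show (univ : Finset (ZMod 2)) = {0, 1} from rfl, sum_pair zero_ne_one]
  obtain rfl | rfl : c = 0 ∨ c = 1 := by decide +revert
  · simp [ZMod.val_one]
  · simp [ZMod.val_one, sub_eq_add_neg]

lemma card_filter_not_ne_zero (x : Fin n → ZMod 2) : #{i | ¬x i ≠ 0} = n - hw x := by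
  have h := card_filter_add_card_filter_not (s := univ) (fun i => x i ≠ 0)
  rw [Finset.card_univ, Fintype.card_fin] at h
  rw [hw]
  omega

lemma hw_le (x : Fin n → ZMod 2) : hw x ≤ n :=
  (card_filter_le _ _).trans_eq (card_fin n)

lemma hw_add_one (x : Fin n → ZMod 2) : hw (x + 1) = n - hw x := by
  have h : ∀ b : ZMod 2, b + 1 ≠ 0 ↔ ¬b ≠ 0 := by decide
  rw [← card_filter_not_ne_zero, hw]
  simp only [Pi.add_apply, Pi.one_apply, h]

lemma exists_hw_eq {k : ℕ} (hk : k ≤ n) : ∃ a : Fin n → ZMod 2, hw a = k :=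
  ⟨fun i => if (i : ℕ) < k then 1 else 0, by simp [hw, Fin.card_filter_val_lt, hk]⟩

def weightCharSum (s : ℕ) (a : Fin n → ZMod 2) : ℤ :=
  ∑ x ∈ univ.filter (fun x : Fin n → ZMod 2 => hw x = s), (-1) ^ (∑ i, x i * a i).val

lemma sum_sign_mul_X_pow_hw (a : Fin n → ZMod 2) :
    ∑ x : Fin n → ZMod 2, C ((-1 : ℤ) ^ (∑ i, x i * a i).val) * X ^ hw x
      = (1 - X) ^ hw a * (1 + X) ^ (n - hw a) := by
  calc ∑ x : Fin n → ZMod 2, C ((-1 : ℤ) ^ (∑ i, x i * a i).val) * X ^ hw x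
      = ∑ x : Fin n → ZMod 2, ∏ i, C ((-1 : ℤ) ^ (x i * a i).val) * X ^ (x i).val := by
        refine sum_congr rfl fun x _ => ?_
        rw [neg_one_pow_val_sum, hw_eq_sum_val, map_prod, ← prod_pow_eq_pow_sum,
          prod_mul_distrib]
    _ = ∏ i, ∑ b : ZMod 2, C ((-1 : ℤ) ^ (b * a i).val) * X ^ b.val :=
        (Fintype.prod_sum fun i (b : ZMod 2) => C ((-1 : ℤ) ^ (b * a i).val) * X ^ b.val).symm
    _ = ∏ i, if a i ≠ 0 then 1 - X else 1 + X := by simp only [sum_sign_mul_X_pow_val]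
    _ = (1 - X) ^ hw a * (1 + X) ^ (n - hw a) := by
        rw [prod_ite, prod_const, prod_const, ← hw, card_filter_not_ne_zero]

lemma weightCharSum_eq_krawtchouk (s : ℕ) (a : Fin n → ZMod 2) :
    weightCharSum s a = krawtchouk (hw a) (n - hw a) s := by
  rw [krawtchouk, ← sum_sign_mul_X_pow_hw, finsetSum_coeff, weightCharSum, sum_filter]
  simp only [coeff_C_mul_X_pow, eq_comm]

lemma weightCharSum_sub {s : ℕ} (hs : s ≤ n) (a : Fin n → ZMod 2) :
    weightCharSum (n - s) a = (-1) ^ hw a * weightCharSum s a := by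
  have hsign : ∀ u v : ZMod 2,
      (-1 : ℤ) ^ ((u + 1) * v).val = (-1) ^ v.val * (-1) ^ (u * v).val := by decide
  rw [weightCharSum, weightCharSum, mul_sum]
  refine (sum_equiv (Equiv.addRight 1) (fun x => ?_) fun x _ => ?_).symm
  · have := hw_add_one x
    have := hw_le x
    simp only [mem_filter, mem_univ, true_and, Equiv.coe_addRight]
    omega
  · rw [Equiv.coe_addRight, neg_one_pow_val_sum, neg_one_pow_val_sum, hw_eq_sum_val,
      ← prod_pow_eq_pow_sum, ← prod_mul_distrib]
    exact prod_congr rfl fun i _ => (hsign (x i) (a i)).symm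

lemma weightCharSum_eq_zero_of_odd {m : ℕ} (hn : n = 2 * m) {a : Fin n → ZMod 2}
    (ha : Odd (hw a)) : weightCharSum m a = 0 := by
  have h := weightCharSum_sub (s := m) (by omega) a
  rw [show n - m = m by omega, ha.neg_one_pow] at h
  linarith

lemma weightCharSum_eq_of_hw_eq_two_mul {j u : ℕ} (hn : n = 2 * (j + u)) {a : Fin n → ZMod 2}
    (ha : hw a = 2 * j) : (weightCharSum (j + u) a : ℚ) = (-1) ^ j * centralRatio j u := by
  rw [weightCharSum_eq_krawtchouk, ha, show n - 2 * j = 2 * u by omega, krawtchouk_even]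

end CharacterSum

/-- The minimum eigenvalue of the Hadamard graph `H_n`, `n = 4t`, equals
`-C(n,n/2)/(n-1)`: every eigenvalue is at least this value, and it is attained. -/
theorem hadamard_graph_min_eigenvalue (t : ℕ) (ht : 1 ≤ t) (n : ℕ) (hn : n = 4 * t) :
    (∀ a : Fin n → ZMod 2,
      ((∑ x ∈ Finset.univ.filter (fun x : Fin n → ZMod 2 => hw x = n / 2),
          (-1 : ℤ) ^ (∑ i, x i * a i).val : ℤ) : ℚ)
        ≥ -(n.choose (n / 2) : ℚ) / (n - 1)) ∧
    (∃ a : Fin n → ZMod 2,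
      ((∑ x ∈ Finset.univ.filter (fun x : Fin n → ZMod 2 => hw x = n / 2),
          (-1 : ℤ) ^ (∑ i, x i * a i).val : ℤ) : ℚ)
        = -(n.choose (n / 2) : ℚ) / (n - 1)) := by
  change (∀ a, (weightCharSum (n / 2) a : ℚ) ≥ _) ∧
    ∃ a, (weightCharSum (n / 2) a : ℚ) = _
  obtain ⟨m, rfl⟩ : ∃ m, n = 2 * (m + 1) := ⟨2 * t - 1, by omega⟩
  have hm : Odd m := ⟨t - 1, by omega⟩
  have hrhs : -((2 * (m + 1)).choose (m + 1) : ℚ) / ((2 * (m + 1) : ℕ) - 1)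
      = -centralRatio 1 m := by
    rw [centralRatio_one, ← centralBinom_eq_two_mul_choose]
    push_cast
    ring_nf
  rw [Nat.mul_div_cancel_left _ two_pos, hrhs]
  refine ⟨fun a => ?_, ?_⟩
  · rcases Nat.even_or_odd (hw a) with ⟨j, hj⟩ | hodd
    · obtain ⟨u, hu⟩ : ∃ u, m + 1 = j + u := ⟨m + 1 - j, by have := hw_le a; omega⟩
      have h := weightCharSum_eq_of_hw_eq_two_mul (j := j) (u := u) (a := a) (by omega) (by omega)
      rw [← hu] at h
      rw [h]
      exact neg_centralRatio_one_le hu.symm hm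
    · rw [weightCharSum_eq_zero_of_odd rfl hodd, Int.cast_zero]
      linarith [centralRatio_pos 1 m]
  · obtain ⟨a, ha⟩ := exists_hw_eq (n := 2 * (m + 1)) (k := 2 * 1) (by omega)
    have h := weightCharSum_eq_of_hw_eq_two_mul (by ring) ha
    rw [add_comm 1 m, pow_one, neg_one_mul] at h
    exact ⟨a, h⟩
end

section
/- For the binary Krawtchouk polynomial with n = 4t-1 and ℓ = 2t: if r = 2j with 0 ≤ j ≤ 2t-1 then K_{2t}^{4t-1}(2j) = (-1)^j C(4t-1, 2t) C(2t-1, j) / C(4t-1, 2j), and if r = 2j+1 with 0 ≤ j ≤ 2t-1 then K_{2t}^{4t-1}(2j+1) = (-1)^{j+1} C(4t-1, 2t) C(2t-1, j) / C(4t-1, 2j+1). -/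
/-!
The reciprocity `C(n, r) K_ℓ(r) = C(n, ℓ) K_r(ℓ)` reduces the claim to the values
`K_d^{4t-1}(2t)`, which are the coefficients of the generating function
`(1 - X)^{2t} (1 + X)^{2t-1} = (1 - X) (1 - X²)^{2t-1}`: the coefficient of `X^{2j}` is
`(-1)^j C(2t-1, j)` and that of `X^{2j+1}` is `(-1)^{j+1} C(2t-1, j)`.
-/

/-- Binary Krawtchouk polynomial `K_ℓ^n(r) = ∑_{i=0}^ℓ (-1)^i C(r,i) C(n-r, ℓ-i)`. -/
def binKraw (n ℓ r : ℕ) : ℤ :=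
  ∑ i ∈ Finset.range (ℓ + 1), (-1 : ℤ) ^ i * (r.choose i) * ((n - r).choose (ℓ - i))

open Polynomial Finset

lemma Nat.choose_mul_choose_sub_comm (n a b : ℕ) :
    n.choose a * (n - a).choose b = n.choose b * (n - b).choose a := by
  by_cases h : a + b ≤ n
  · have ha := Nat.choose_mul (n := n) (Nat.le_add_right a b)
    have hb := Nat.choose_mul (n := n) (Nat.le_add_left b a)
    rw [Nat.add_sub_cancel_left] at ha
    rw [Nat.add_sub_cancel] at hb
    rw [← ha, ← hb, Nat.choose_symm_add]
  · rcases Nat.eq_zero_or_pos a with rfl | ha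
    · simp
    rcases Nat.eq_zero_or_pos b with rfl | hb
    · simp
    rw [Nat.choose_eq_zero_of_lt (by omega : n - a < b),
      Nat.choose_eq_zero_of_lt (by omega : n - b < a), mul_zero, mul_zero]

lemma Nat.choose_mul_choose_mul_choose_sub_comm {n ℓ r i : ℕ} (hir : i ≤ r) (hiℓ : i ≤ ℓ) :
    n.choose r * r.choose i * (n - r).choose (ℓ - i)
      = n.choose ℓ * ℓ.choose i * (n - ℓ).choose (r - i) := by
  rw [Nat.choose_mul hir, Nat.choose_mul hiℓ, mul_assoc, mul_assoc,
    show n - r = n - i - (r - i) by omega, show n - ℓ = n - i - (ℓ - i) by omega,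
    Nat.choose_mul_choose_sub_comm]

lemma binKraw_eq_sum_range_min (n ℓ r : ℕ) :
    binKraw n ℓ r = ∑ i ∈ range (min ℓ r + 1),
      (-1 : ℤ) ^ i * (r.choose i) * ((n - r).choose (ℓ - i)) := by
  refine (sum_subset (range_subset_range.2 (by omega)) fun i hi hni => ?_).symm
  rw [mem_range] at hi hni
  rw [Nat.choose_eq_zero_of_lt (by omega : r < i)]
  simp

theorem choose_mul_binKraw_comm (n ℓ r : ℕ) :
    n.choose r * binKraw n ℓ r = n.choose ℓ * binKraw n r ℓ := by
  rw [binKraw_eq_sum_range_min, binKraw_eq_sum_range_min, min_comm, mul_sum, mul_sum]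
  refine sum_congr rfl fun i hi => ?_
  rw [mem_range] at hi
  have h := Nat.choose_mul_choose_mul_choose_sub_comm (n := n) (by omega : i ≤ r) (by omega : i ≤ ℓ)
  have h' : (n.choose r : ℤ) * r.choose i * (n - r).choose (ℓ - i)
      = n.choose ℓ * ℓ.choose i * (n - ℓ).choose (r - i) := by exact_mod_cast h
  linear_combination (-1 : ℤ) ^ i * h'

theorem binKraw_eq_div {n r : ℕ} (hr : r ≤ n) (ℓ : ℕ) :
    (binKraw n ℓ r : ℚ) = n.choose ℓ * binKraw n r ℓ / n.choose r := by
  have hpos : (n.choose r : ℚ) ≠ 0 := Nat.cast_ne_zero.2 (Nat.choose_pos hr).ne'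
  rw [eq_div_iff hpos, mul_comm]
  exact_mod_cast choose_mul_binKraw_comm n ℓ r

lemma coeff_one_sub_X_pow {R : Type*} [CommRing R] (r k : ℕ) :
    ((1 - X : R[X]) ^ r).coeff k = (-1) ^ k * r.choose k := by
  have h : (1 - X : R[X]) ^ r = C ((-1) ^ r) * (X + C (-1)) ^ r := by
    rw [C_pow, ← mul_pow, C_neg, C_1]; ring
  rw [h, coeff_C_mul, coeff_X_add_C_pow]
  rcases le_or_gt k r with hk | hk
  · rw [← mul_assoc, ← pow_add, show r + (r - k) = k + 2 * (r - k) by omega, pow_add, pow_mul]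
    simp
  · simp [Nat.choose_eq_zero_of_lt hk]

theorem binKraw_eq_coeff (n ℓ r : ℕ) :
    binKraw n ℓ r = ((1 - X) ^ r * (1 + X) ^ (n - r) : ℤ[X]).coeff ℓ := by
  rw [coeff_mul, Nat.sum_antidiagonal_eq_sum_range_succ_mk, binKraw]
  refine sum_congr rfl fun i _ => ?_
  rw [coeff_one_sub_X_pow, coeff_one_add_X_pow]

theorem binKraw_two_mul_add_one_succ_eq_coeff (m d : ℕ) :
    binKraw (2 * m + 1) d (m + 1) = ((1 - X) * expand ℤ 2 ((1 - X) ^ m)).coeff d := by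
  rw [binKraw_eq_coeff, show 2 * m + 1 - (m + 1) = m by omega]
  congr 1
  simp only [map_pow, map_sub, map_one, expand_X]
  rw [show (1 - X ^ 2 : ℤ[X]) = (1 - X) * (1 + X) by ring, mul_pow]
  ring

lemma coeff_expand_two_mul (p : ℤ[X]) (k : ℕ) : (expand ℤ 2 p).coeff (2 * k) = p.coeff k := by
  rw [coeff_expand two_pos, if_pos (dvd_mul_right 2 k), Nat.mul_div_cancel_left k two_pos]

lemma coeff_expand_two_mul_add_one (p : ℤ[X]) (k : ℕ) :
    (expand ℤ 2 p).coeff (2 * k + 1) = 0 := by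
  rw [coeff_expand two_pos, if_neg (by omega)]

theorem binKraw_two_mul_add_one_succ_even (m j : ℕ) :
    binKraw (2 * m + 1) (2 * j) (m + 1) = (-1) ^ j * m.choose j := by
  rw [binKraw_two_mul_add_one_succ_eq_coeff, sub_mul, one_mul, coeff_sub, coeff_expand_two_mul,
    coeff_one_sub_X_pow]
  rcases j with _ | k
  · simp
  · rw [show 2 * (k + 1) = 2 * k + 1 + 1 by ring, coeff_X_mul, coeff_expand_two_mul_add_one,
      sub_zero]

theorem binKraw_two_mul_add_one_succ_odd (m j : ℕ) :
    binKraw (2 * m + 1) (2 * j + 1) (m + 1) = (-1) ^ (j + 1) * m.choose j := by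
  rw [binKraw_two_mul_add_one_succ_eq_coeff, sub_mul, one_mul, coeff_sub, coeff_X_mul,
    coeff_expand_two_mul_add_one, coeff_expand_two_mul, coeff_one_sub_X_pow]
  ring

/-- Eigenvalues of the Hamming graph `H_{4t-1,2t}`: explicit formulas for
`K_{2t}^{4t-1}(2j)` and `K_{2t}^{4t-1}(2j+1)` for `0 ≤ j ≤ 2t-1`. -/
theorem binKraw_4t_sub_one (t j : ℕ) (ht : 1 ≤ t) (hj : j ≤ 2 * t - 1) :
    ((binKraw (4 * t - 1) (2 * t) (2 * j) : ℤ) : ℚ)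
        = (-1 : ℚ) ^ j * ((4 * t - 1).choose (2 * t)) * ((2 * t - 1).choose j)
            / ((4 * t - 1).choose (2 * j)) ∧
    ((binKraw (4 * t - 1) (2 * t) (2 * j + 1) : ℤ) : ℚ)
        = (-1 : ℚ) ^ (j + 1) * ((4 * t - 1).choose (2 * t)) * ((2 * t - 1).choose j)
            / ((4 * t - 1).choose (2 * j + 1)) := by
  obtain ⟨m, hm⟩ : ∃ m, 2 * t - 1 = m := ⟨_, rfl⟩
  rw [hm, show 4 * t - 1 = 2 * m + 1 by omega, show 2 * t = m + 1 by omega,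
    binKraw_eq_div (by omega : 2 * j ≤ 2 * m + 1), binKraw_two_mul_add_one_succ_even,
    binKraw_eq_div (by omega : 2 * j + 1 ≤ 2 * m + 1), binKraw_two_mul_add_one_succ_odd]
  constructor <;> push_cast <;> ring
end
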